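/- arXiv:1109.2157 — 4 statements merged into one kernel-verified Lean document; each statement's English description precedes it below -/
import Mathlib

section
/- Let F be a nonnegative Borel measure on ℝ^N. For any a > 0 and any t ∈ ℝ^N with ρ(0,t)·a ≤ 1/N, one has the truncation inequality ∫_{{λ : ρ(0,λ) ≤ a}} ⟨t,λ⟩² F(dλ) ≤ (24/11) ∫_{ℝ^N} (1 − cos⟨t,λ⟩) F(dλ). -/
/-!
On the truncation set, `|t_j λ_j| ^ H_j ≤ ρ(0,t) ρ(0,λ) ≤ 1/N` for every coordinate, and since
`H_j ≤ 1` this forces `|t_j λ_j| ≤ 1/N`, hence `|⟨t,λ⟩| ≤ 1`. For `|x| ≤ 1` the half-angle formula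
`1 - cos x = 2 sin² (x/2)` together with `sin y ≥ y - y³/6` gives `1 - cos x ≥ (11/24) x²`.
-/

open MeasureTheory Filter
open scoped ENNReal NNReal

noncomputable section

/-- `ℝ^n` with the Euclidean norm. -/
abbrev ESp (n : ℕ) := EuclideanSpace ℝ (Fin n)

/-- The anisotropic metric `ρ(s,t) = ∑_j |s_j - t_j| ^ H_j`. -/
def rho {N : ℕ} (H : Fin N → ℝ) (s t : ESp N) : ℝ := ∑ j, |s j - t j| ^ (H j)

/-- `Q = ∑_j 1 / H_j`. -/
def Qof {N : ℕ} (H : Fin N → ℝ) : ℝ := ∑ j, (H j)⁻¹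

/-- The cube `C(λ,h)` of side length `2h` centered at `λ`. -/
def cubeC {N : ℕ} (lam : ESp N) (h : ℝ) : Set (ESp N) := {x | ∀ j, |x j - lam j| ≤ h}

/-- The Euclidean inner product on `ℝ^N`. -/
def ip {N : ℕ} (s t : ESp N) : ℝ := ∑ j, s j * t j

/-- The filter `‖λ‖ → ∞` on `ℝ^N`. -/
def atNormTop (N : ℕ) : Filter (ESp N) := Filter.comap (fun lam : ESp N => ‖lam‖) Filter.atTop

/-- An exponential sum `g(λ) = ∑_j a_j (e^{i⟨s^j,λ⟩} - 1)`. -/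
def expSum {N n : ℕ} (a : Fin n → ℝ) (s : Fin n → ESp N) (lam : ESp N) : ℂ :=
  ∑ j, (a j : ℂ) * (Complex.exp (Complex.I * (ip (s j) lam : ℂ)) - 1)

theorem Real.sq_le_mul_one_sub_cos {x : ℝ} (hx : |x| ≤ 1) :
    x ^ 2 ≤ 24 / 11 * (1 - Real.cos x) := by
  set y := |x| / 2 with hy
  have hy0 : 0 ≤ y := by positivity
  have hy1 : y ≤ 1 / 2 := by linarith
  have hsin : y - y ^ 3 / 6 ≤ Real.sin y := Real.sin_ge_sub_cube hy0
  have hcos : Real.cos x = 1 - 2 * Real.sin y ^ 2 := by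
    rw [← Real.cos_abs, show |x| = 2 * y by ring, Real.cos_two_mul, Real.cos_sq']
    ring
  have hx2 : x ^ 2 = 4 * y ^ 2 := by rw [← sq_abs, show |x| = 2 * y by ring]; ring
  have hpos : 0 ≤ y - y ^ 3 / 6 := by nlinarith
  have hsq := pow_le_pow_left₀ hpos hsin 2
  have hquart : y ^ 4 ≤ y ^ 2 / 4 := by
    have : y ^ 2 ≤ 1 / 4 := by nlinarith
    nlinarith [mul_le_mul_of_nonneg_left this (sq_nonneg y)]
  rw [hcos, hx2]
  nlinarith [sq_nonneg (y ^ 3)]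

theorem Real.le_of_rpow_le_of_le_one {y c h : ℝ} (hy : 0 ≤ y) (hh : h ∈ Set.Ioc 0 1)
    (hc : c ≤ 1) (hyc : y ^ h ≤ c) : y ≤ c := by
  rcases le_or_gt y 1 with hy1 | hy1
  · exact (Real.self_le_rpow_of_le_one hy hy1 hh.2).trans hyc
  · linarith [Real.one_lt_rpow hy1 hh.1]

section

variable {N : ℕ} {H : Fin N → ℝ}

theorem rho_zero_nonneg (s : ESp N) : 0 ≤ rho H 0 s :=
  Finset.sum_nonneg fun _ _ => Real.rpow_nonneg (abs_nonneg _) _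

theorem rpow_abs_le_rho_zero (s : ESp N) (j : Fin N) : |s j| ^ H j ≤ rho H 0 s := by
  simpa [rho] using Finset.single_le_sum (f := fun i => |s i| ^ H i)
    (fun i _ => Real.rpow_nonneg (abs_nonneg _) _) (Finset.mem_univ j)

theorem measurable_rho_zero : Measurable (rho H 0) := by
  unfold rho; fun_prop

theorem abs_mul_le_of_rho_mul_rho_le (hH : ∀ j, H j ∈ Set.Ioc 0 1) {s t : ESp N} {c : ℝ}
    (hc : c ≤ 1) (hst : rho H 0 s * rho H 0 t ≤ c) (j : Fin N) : |s j * t j| ≤ c := by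
  refine Real.le_of_rpow_le_of_le_one (abs_nonneg _) (hH j) hc ?_
  calc |s j * t j| ^ H j = |s j| ^ H j * |t j| ^ H j := by
        rw [abs_mul, Real.mul_rpow (abs_nonneg _) (abs_nonneg _)]
    _ ≤ rho H 0 s * rho H 0 t :=
        mul_le_mul (rpow_abs_le_rho_zero s j) (rpow_abs_le_rho_zero t j)
          (Real.rpow_nonneg (abs_nonneg _) _) (rho_zero_nonneg s)
    _ ≤ c := hst

theorem abs_ip_le_one_of_rho_mul_rho_le (hH : ∀ j, H j ∈ Set.Ioc 0 1) {s t : ESp N}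
    (hst : rho H 0 s * rho H 0 t ≤ 1 / N) : |ip s t| ≤ 1 := by
  calc |ip s t| ≤ ∑ j, |s j * t j| := Finset.abs_sum_le_sum_abs _ _
    _ ≤ ∑ _j : Fin N, (1 / N : ℝ) := Finset.sum_le_sum fun j _ =>
        abs_mul_le_of_rho_mul_rho_le hH
          (div_le_one_of_le₀ (Nat.one_le_cast.2 j.pos) (Nat.cast_nonneg N)) hst j
    _ ≤ 1 := by simpa using mul_inv_le_one

end

theorem truncation_inequality_general
    {N : ℕ} (H : Fin N → ℝ) (hH : ∀ j, H j ∈ Set.Ioo (0 : ℝ) 1)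
    (F : Measure (ESp N)) (a : ℝ) (t : ESp N)
    (hta : rho H 0 t * a ≤ 1 / N) :
    ∫⁻ lam in {lam : ESp N | rho H 0 lam ≤ a}, ENNReal.ofReal (ip t lam ^ 2) ∂F ≤
      ENNReal.ofReal (24 / 11) *
        ∫⁻ lam, ENNReal.ofReal (1 - Real.cos (ip t lam)) ∂F := by
  have hH' : ∀ j, H j ∈ Set.Ioc 0 1 := fun j => Set.Ioo_subset_Ioc_self (hH j)
  have hS : MeasurableSet {lam : ESp N | rho H 0 lam ≤ a} :=
    measurable_rho_zero measurableSet_Iic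
  calc ∫⁻ lam in {lam : ESp N | rho H 0 lam ≤ a}, ENNReal.ofReal (ip t lam ^ 2) ∂F
      ≤ ∫⁻ lam in {lam : ESp N | rho H 0 lam ≤ a},
          ENNReal.ofReal (24 / 11) * ENNReal.ofReal (1 - Real.cos (ip t lam)) ∂F := by
        refine setLIntegral_mono' hS fun lam hlam => ?_
        have hprod : rho H 0 t * rho H 0 lam ≤ 1 / N :=
          (mul_le_mul_of_nonneg_left hlam (rho_zero_nonneg t)).trans hta
        rw [← ENNReal.ofReal_mul (by norm_num)]
        exact ENNReal.ofReal_le_ofReal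
          (Real.sq_le_mul_one_sub_cos (abs_ip_le_one_of_rho_mul_rho_le hH' hprod))
    _ ≤ ∫⁻ lam, ENNReal.ofReal (24 / 11) * ENNReal.ofReal (1 - Real.cos (ip t lam)) ∂F :=
        setLIntegral_le_lintegral _ _
    _ = ENNReal.ofReal (24 / 11) * ∫⁻ lam, ENNReal.ofReal (1 - Real.cos (ip t lam)) ∂F :=
        lintegral_const_mul' _ _ ENNReal.ofReal_ne_top

/-- Lemma 3.5(i), truncation inequality: for `a > 0` and `ρ(0,t)·a ≤ 1/N`,
`∫_{ρ(0,λ) ≤ a} ⟨t,λ⟩² F(dλ) ≤ (24/11) ∫ (1 - cos⟨t,λ⟩) F(dλ)`. -/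
theorem truncation_inequality
    {N : ℕ} (hN : 0 < N) (H : Fin N → ℝ) (hH : ∀ j, H j ∈ Set.Ioo (0 : ℝ) 1)
    (F : Measure (ESp N)) (a : ℝ) (ha : 0 < a) (t : ESp N)
    (hta : rho H 0 t * a ≤ 1 / N) :
    ∫⁻ lam in {lam : ESp N | rho H 0 lam ≤ a}, ENNReal.ofReal (ip t lam ^ 2) ∂F ≤
      ENNReal.ofReal (24 / 11) *
        ∫⁻ lam, ENNReal.ofReal (1 - Real.cos (ip t lam)) ∂F :=
  truncation_inequality_general H hH F a t hta
end
end

section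
/- Let F be a nonnegative Borel measure on ℝ^N and suppose there is a finite constant c₁ such that ∫_{ℝ^N} (1 − cos⟨t,λ⟩) F(dλ) ≤ c₁ ∑_{i=1}^N |t_i|^{2H_i} for all t ∈ [−1,1]^N. Then there exists a finite constant c₇ (depending only on N, H and c₁) such that for all a ≥ 1: F({λ ∈ ℝ^N : ρ(0,λ) > a}) ≤ c₇ a^{−2}. -/
open MeasureTheory Filter
open scoped ENNReal NNReal

noncomputable section

/-!
Averaging `1 - cos (u x)` over the frequencies `u ∈ (0, r]` gives at least
`min (r |x|, 2) ^ 2 / 15`, while for `t = u eⱼ` the hypothesis bounds the `F`-integral of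
`1 - cos (u λⱼ)` by `c₁ u ^ (2 Hⱼ)`. By Tonelli, `F {c ≤ r |λⱼ|} ≤ 15 c₁ r ^ (2 Hⱼ) / c ^ 2`,
which is `O(a⁻²)` for `r = a ^ (-1 / Hⱼ)`. Finally `{ρ(0, λ) > a}` is covered by the `N` sets
`{|λⱼ| ^ Hⱼ > a / N}`.
-/

lemma sigmaFinite_restrict_of_lintegral_ne_top {α ι : Type*} [MeasurableSpace α] [Countable ι]
    {μ : Measure α} {f : ι → α → ℝ≥0∞} {s : Set α} (hs : MeasurableSet s)
    (hf : ∀ i, AEMeasurable (f i) μ) (hf_fin : ∀ i, ∫⁻ x, f i x ∂μ ≠ ∞)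
    (hpos : ∀ x ∈ s, ∃ i, f i x ≠ 0) : SigmaFinite (μ.restrict s) := by
  let A : ι × ℕ → Set α := fun p => {x | ((p.2 : ℝ≥0∞) + 1)⁻¹ ≤ f p.1 x}
  refine Measure.sigmaFinite_of_countable (S := Set.range A ∪ {sᶜ})
    ((Set.countable_range A).union (Set.countable_singleton _)) ?_ ?_
  · rintro t (⟨⟨i, n⟩, rfl⟩ | rfl)
    · calc μ.restrict s (A (i, n)) ≤ μ (A (i, n)) := Measure.restrict_apply_le _ _
        _ ≤ (∫⁻ x, f i x ∂μ) / ((n : ℝ≥0∞) + 1)⁻¹ :=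
          meas_ge_le_lintegral_div (hf i) (by simp) (by simp)
        _ < ∞ := ENNReal.div_lt_top (hf_fin i) (by simp)
    · simp [Measure.restrict_apply hs.compl]
  · refine Set.eq_univ_of_forall fun x => ?_
    by_cases hx : x ∈ s
    · obtain ⟨i, hi⟩ := hpos x hx
      obtain ⟨n, hn⟩ := ENNReal.exists_inv_nat_lt hi
      refine ⟨A (i, n), Or.inl ⟨(i, n), rfl⟩, ?_⟩
      exact le_trans (ENNReal.inv_le_inv.2 le_self_add) hn.le
    · exact ⟨sᶜ, Or.inr rfl, hx⟩

lemma sq_div_five_le_one_sub_cos {θ : ℝ} (hθ : |θ| ≤ Real.pi) : θ ^ 2 / 5 ≤ 1 - Real.cos θ := by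
  have hπ : Real.pi ^ 2 ≤ 10 := by nlinarith [Real.pi_lt_d2, Real.pi_pos]
  have : θ ^ 2 / 5 ≤ 2 / Real.pi ^ 2 * θ ^ 2 := by
    rw [div_mul_eq_mul_div, div_le_div_iff₀ (by norm_num) (by positivity)]
    nlinarith [sq_nonneg θ]
  linarith [Real.cos_le_one_sub_mul_cos_sq hθ]

lemma integral_one_sub_cos_mul (r : ℝ) {x : ℝ} (hx : x ≠ 0) :
    ∫ u in (0 : ℝ)..r, (1 - Real.cos (u * x)) = r - Real.sin (r * x) / x := by
  rw [intervalIntegral.integral_sub intervalIntegrable_const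
    ((by fun_prop : Continuous fun u => Real.cos (u * x)).intervalIntegrable _ _),
    intervalIntegral.integral_comp_mul_right Real.cos hx, integral_cos]
  simp [div_eq_inv_mul]

lemma mul_min_sq_le_integral_one_sub_cos {r : ℝ} (hr : 0 ≤ r) (x : ℝ) :
    r * min (r * |x|) 2 ^ 2 / 15 ≤ ∫ u in (0 : ℝ)..r, (1 - Real.cos (u * x)) := by
  rcases le_or_gt (r * |x|) 2 with hsmall | hlarge
  · have hpoint : ∀ u ∈ Set.Icc 0 r, (u * x) ^ 2 / 5 ≤ 1 - Real.cos (u * x) := fun u hu =>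
      sq_div_five_le_one_sub_cos <| by
        rw [abs_mul, abs_of_nonneg hu.1]
        nlinarith [abs_nonneg x, Real.two_le_pi, hu.2]
    calc r * min (r * |x|) 2 ^ 2 / 15 = ∫ u in (0 : ℝ)..r, (u * x) ^ 2 / 5 := by
          simp only [min_eq_left hsmall, mul_pow, intervalIntegral.integral_div,
            intervalIntegral.integral_mul_const, integral_pow, sq_abs]
          ring
      _ ≤ _ := intervalIntegral.integral_mono_on hr
          (Continuous.intervalIntegrable (by fun_prop) _ _)
          (Continuous.intervalIntegrable (by fun_prop) _ _) hpoint
  · have hx : 0 < |x| := by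
      by_contra! h
      nlinarith [abs_nonneg x]
    have hsin : Real.sin (r * x) / x ≤ r / 2 := by
      calc Real.sin (r * x) / x ≤ |Real.sin (r * x) / x| := le_abs_self _
        _ ≤ 1 / |x| := by rw [abs_div]; gcongr; exact Real.abs_sin_le_one _
        _ ≤ r / 2 := by rw [div_le_div_iff₀ hx two_pos]; linarith
    rw [integral_one_sub_cos_mul r (abs_pos.1 hx), min_eq_right hlarge.le]
    linarith

lemma ofReal_le_lintegral_one_sub_cos {r c x : ℝ} (hr : 0 ≤ r) (hc : 0 ≤ c) (hc2 : c ≤ 2)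
    (hcx : c ≤ r * |x|) :
    ENNReal.ofReal (r * c ^ 2 / 15) ≤
      ∫⁻ u in Set.Ioc 0 r, ENNReal.ofReal (1 - Real.cos (u * x)) := by
  have hint : IntegrableOn (fun u => 1 - Real.cos (u * x)) (Set.Ioc 0 r) :=
    (by fun_prop : Continuous fun u => 1 - Real.cos (u * x)).integrableOn_Ioc
  rw [← ofReal_integral_eq_lintegral_ofReal hint
      (ae_of_all _ fun u => sub_nonneg.2 (Real.cos_le_one _)),
    ← intervalIntegral.integral_of_le hr]
  refine ENNReal.ofReal_le_ofReal (le_trans ?_ (mul_min_sq_le_integral_one_sub_cos hr x))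
  gcongr
  exact le_min hcx hc2

theorem measure_le_of_lintegral_one_sub_cos_le {X : Type*} [MeasurableSpace X] {μ : Measure X}
    {g : X → ℝ} (hg : Measurable g) {r c K : ℝ} (hr : 0 < r) (hc : 0 < c) (hc2 : c ≤ 2)
    (hK : ∀ u ∈ Set.Ioc 0 r,
      ∫⁻ x, ENNReal.ofReal (1 - Real.cos (u * g x)) ∂μ ≤ ENNReal.ofReal K) :
    μ {x | c ≤ r * |g x|} ≤ ENNReal.ofReal (15 * K / c ^ 2) := by
  set S := {x | c ≤ r * |g x|}
  have hS : MeasurableSet S := measurableSet_le measurable_const (by fun_prop)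
  -- Tonelli needs σ-finiteness, which `μ` lacks in general; on `S` Markov's inequality at
  -- the frequencies `u = r / (n + 1)` provides it.
  have : SigmaFinite (μ.restrict S) := by
    refine sigmaFinite_restrict_of_lintegral_ne_top (ι := ℕ)
      (f := fun n x => ENNReal.ofReal (1 - Real.cos (r / (n + 1) * g x))) hS
      (fun n => by fun_prop)
      (fun n => ne_top_of_le_ne_top ENNReal.ofReal_ne_top (hK _ ⟨by positivity, ?_⟩)) ?_
    · exact div_le_self hr.le (by linarith [n.cast_nonneg (α := ℝ)])
    · intro x hx
      have hgx : g x ≠ 0 := fun h => hc.not_ge (by simpa [S, h] using hx)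
      obtain ⟨n, hn⟩ := exists_nat_ge (r * |g x| / 2)
      refine ⟨n, ENNReal.ofReal_pos.2 (lt_of_lt_of_le ?_ (sq_div_five_le_one_sub_cos ?_)) |>.ne'⟩
      · positivity
      · rw [abs_mul, abs_of_pos (by positivity), div_mul_eq_mul_div, div_le_iff₀ (by positivity)]
        nlinarith [Real.two_le_pi]
  have hmeas : Measurable (Function.uncurry fun (x : X) (u : ℝ) =>
      ENNReal.ofReal (1 - Real.cos (u * g x))) := by
    fun_prop
  have key : ENNReal.ofReal (r * c ^ 2 / 15) * μ S ≤ ENNReal.ofReal (r * K) := by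
    calc ENNReal.ofReal (r * c ^ 2 / 15) * μ S
        = ∫⁻ _ in S, ENNReal.ofReal (r * c ^ 2 / 15) ∂μ := (setLIntegral_const _ _).symm
      _ ≤ ∫⁻ x in S, (∫⁻ u in Set.Ioc 0 r, ENNReal.ofReal (1 - Real.cos (u * g x))) ∂μ :=
          setLIntegral_mono (by fun_prop) fun x hx =>
            ofReal_le_lintegral_one_sub_cos hr.le hc.le hc2 hx
      _ = ∫⁻ u in Set.Ioc 0 r, ∫⁻ x in S, ENNReal.ofReal (1 - Real.cos (u * g x)) ∂μ :=
          lintegral_lintegral_swap hmeas.aemeasurable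
      _ ≤ ∫⁻ u in Set.Ioc 0 r, ENNReal.ofReal K :=
          setLIntegral_mono measurable_const fun u hu =>
            (setLIntegral_le_lintegral _ _).trans (hK u hu)
      _ = ENNReal.ofReal (r * K) := by
          rw [setLIntegral_const, Real.volume_Ioc, sub_zero, ENNReal.ofReal_mul hr.le, mul_comm]
  rw [show r * K = r * c ^ 2 / 15 * (15 * K / c ^ 2) by field_simp,
    ENNReal.ofReal_mul (by positivity)] at key
  exact (ENNReal.mul_le_mul_iff_right (by positivity) ENNReal.ofReal_ne_top).1 key

def OneSubCosIntegralBound {N : ℕ} (H : Fin N → ℝ) (c₁ : ℝ) (F : Measure (ESp N)) : Prop :=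
  ∀ t : ESp N, (∀ j, t j ∈ Set.Icc (-1 : ℝ) 1) →
    ∫⁻ lam, ENNReal.ofReal (1 - Real.cos (ip t lam)) ∂F ≤
      ENNReal.ofReal (c₁ * ∑ i, |t i| ^ (2 * H i))

section

variable {N : ℕ} {H : Fin N → ℝ}

lemma ip_single_left (j : Fin N) (u : ℝ) (lam : ESp N) :
    ip (EuclideanSpace.single j u) lam = u * lam j := by
  simp [ip, PiLp.single_apply]

lemma sum_abs_single_rpow {p : Fin N → ℝ} (hp : ∀ i, 0 < p i) (j : Fin N) (u : ℝ) :
    ∑ i, |(EuclideanSpace.single j u : ESp N) i| ^ p i = |u| ^ p j := by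
  rw [Finset.sum_eq_single j (fun i _ hij => by simp [hij, (hp i).ne']) (by simp)]
  simp

lemma OneSubCosIntegralBound.lintegral_le {c₁ : ℝ} {F : Measure (ESp N)}
    (hF : OneSubCosIntegralBound H c₁ F) (hH : ∀ j, 0 < H j) (j : Fin N) {u : ℝ}
    (hu : |u| ≤ 1) :
    ∫⁻ lam, ENNReal.ofReal (1 - Real.cos (u * lam j)) ∂F ≤
      ENNReal.ofReal (c₁ * |u| ^ (2 * H j)) := by
  have ht : ∀ i, (EuclideanSpace.single j u : ESp N) i ∈ Set.Icc (-1 : ℝ) 1 := fun i => by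
    rw [PiLp.single_apply]
    split_ifs <;> simp [abs_le.1 hu]
  simpa only [ip_single_left, sum_abs_single_rpow fun i => mul_pos two_pos (hH i)]
    using hF _ ht

lemma setOf_lt_rho_zero_subset {a : ℝ} (ha : 0 ≤ a) :
    {lam : ESp N | a < rho H 0 lam} ⊆ ⋃ j, {lam : ESp N | a / N < |lam j| ^ H j} := by
  intro lam hlam
  have hsum : ∑ _j : Fin N, a / N < ∑ j, |lam j| ^ H j := by
    refine lt_of_le_of_lt ?_ (by simpa [rho] using hlam)
    rcases N.eq_zero_or_pos with rfl | hN
    · simpa using ha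
    · simp [field]
  simpa using Finset.exists_lt_of_sum_lt hsum

lemma OneSubCosIntegralBound.measure_lt_abs_rpow_le {c₁ : ℝ} {F : Measure (ESp N)}
    (hF : OneSubCosIntegralBound H c₁ F) (hH : ∀ j, 0 < H j) (hc₁ : 0 ≤ c₁) (j : Fin N)
    {a : ℝ} (ha : 1 ≤ a) :
    F {lam : ESp N | a / N < |lam j| ^ H j} ≤
      ENNReal.ofReal (15 * c₁ / ((N : ℝ) ^ (-(H j)⁻¹)) ^ 2 / a ^ 2) := by
  have ha₀ : 0 < a := one_pos.trans_le ha
  have hN : (1 : ℝ) ≤ N := Nat.one_le_cast.2 (Fin.pos j)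
  have hexp : -(H j)⁻¹ ≤ 0 := neg_nonpos.2 (inv_nonneg.2 (hH j).le)
  set r := a ^ (-(H j)⁻¹)
  set c := (N : ℝ) ^ (-(H j)⁻¹)
  have hr : 0 < r := Real.rpow_pos_of_pos ha₀ _
  have hr₁ : r ≤ 1 := Real.rpow_le_one_of_one_le_of_nonpos ha hexp
  have hc : 0 < c := Real.rpow_pos_of_pos (by linarith) _
  have hc_le : c ≤ 1 := Real.rpow_le_one_of_one_le_of_nonpos hN hexp
  have hsub : {lam : ESp N | a / N < |lam j| ^ H j} ⊆ {lam | c ≤ r * |lam j|} := by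
    intro lam hlam
    have hlt : (a / N) ^ (H j)⁻¹ < |lam j| :=
      (Real.rpow_inv_lt_iff_of_pos (by positivity) (abs_nonneg _) (hH j)).2 hlam
    have hrc : r * (a / N) ^ (H j)⁻¹ = c := by
      simp only [r, c]
      rw [Real.div_rpow ha₀.le (by linarith), Real.rpow_neg ha₀.le, Real.rpow_neg (by linarith)]
      field_simp
    exact hrc ▸ mul_le_mul_of_nonneg_left hlt.le hr.le
  have hr_pow : r ^ (2 * H j) = (a ^ 2)⁻¹ := by
    rw [← Real.rpow_mul ha₀.le, show -(H j)⁻¹ * (2 * H j) = -2 by field_simp [(hH j).ne'],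
      Real.rpow_neg ha₀.le, Real.rpow_two]
  have hK : ∀ u ∈ Set.Ioc 0 r, ∫⁻ lam, ENNReal.ofReal (1 - Real.cos (u * lam j)) ∂F ≤
      ENNReal.ofReal (c₁ * (a ^ 2)⁻¹) := fun u hu => by
    rw [← abs_of_pos hu.1] at hu
    refine (hF.lintegral_le hH j (hu.2.trans hr₁)).trans (ENNReal.ofReal_le_ofReal ?_)
    rw [← hr_pow]
    gcongr
    exacts [mul_nonneg two_pos.le (hH j).le, hu.2]
  calc F {lam : ESp N | a / N < |lam j| ^ H j}
      ≤ F {lam | c ≤ r * |lam j|} := measure_mono hsub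
    _ ≤ ENNReal.ofReal (15 * (c₁ * (a ^ 2)⁻¹) / c ^ 2) :=
      measure_le_of_lintegral_one_sub_cos_le (by fun_prop) hr hc (by linarith) hK
    _ = _ := by congr 1; ring

end

theorem spectral_tail_estimate_general
    {N : ℕ} (H : Fin N → ℝ) (hH : ∀ j, H j ∈ Set.Ioo (0 : ℝ) 1)
    (c₁ : ℝ) (hc₁ : 0 ≤ c₁) :
    ∃ c₇ : ℝ, 0 < c₇ ∧
      ∀ F : Measure (ESp N),
        (∀ t : ESp N, (∀ j, t j ∈ Set.Icc (-1 : ℝ) 1) →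
          ∫⁻ lam, ENNReal.ofReal (1 - Real.cos (ip t lam)) ∂F ≤
            ENNReal.ofReal (c₁ * ∑ i, |t i| ^ (2 * H i))) →
        ∀ a : ℝ, 1 ≤ a →
          F {lam : ESp N | a < rho H 0 lam} ≤ ENNReal.ofReal (c₇ / a ^ 2) := by
  have hH₀ : ∀ j, 0 < H j := fun j => (hH j).1
  set b : Fin N → ℝ := fun j => 15 * c₁ / ((N : ℝ) ^ (-(H j)⁻¹)) ^ 2
  refine ⟨1 + ∑ j, b j, by positivity, fun F hF a ha => ?_⟩
  calc F {lam : ESp N | a < rho H 0 lam}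
      ≤ F (⋃ j, {lam : ESp N | a / N < |lam j| ^ H j}) :=
        measure_mono (setOf_lt_rho_zero_subset (by linarith))
    _ ≤ ∑ j, F {lam : ESp N | a / N < |lam j| ^ H j} := measure_iUnion_fintype_le _ _
    _ ≤ ∑ j, ENNReal.ofReal (b j / a ^ 2) :=
        Finset.sum_le_sum fun j _ => OneSubCosIntegralBound.measure_lt_abs_rpow_le hF hH₀ hc₁ j ha
    _ = ENNReal.ofReal (∑ j, b j / a ^ 2) :=
        (ENNReal.ofReal_sum_of_nonneg fun j _ => by positivity).symm
    _ ≤ ENNReal.ofReal ((1 + ∑ j, b j) / a ^ 2) := by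
        rw [← Finset.sum_div]
        gcongr
        linarith

/-- Lemma 3.5(ii), tail estimate: if `∫ (1 - cos⟨t,λ⟩) F(dλ) ≤ c₁ ∑ |t_i|^{2H_i}` for all
`t ∈ [-1,1]^N`, then `F{λ : ρ(0,λ) > a} ≤ c₇ a⁻²` for all `a ≥ 1`. -/
theorem spectral_tail_estimate
    {N : ℕ} (hN : 0 < N) (H : Fin N → ℝ) (hH : ∀ j, H j ∈ Set.Ioo (0 : ℝ) 1)
    (c₁ : ℝ) (hc₁ : 0 ≤ c₁) :
    ∃ c₇ : ℝ, 0 < c₇ ∧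
      ∀ F : Measure (ESp N),
        (∀ t : ESp N, (∀ j, t j ∈ Set.Icc (-1 : ℝ) 1) →
          ∫⁻ lam, ENNReal.ofReal (1 - Real.cos (ip t lam)) ∂F ≤
            ENNReal.ofReal (c₁ * ∑ i, |t i| ^ (2 * H i))) →
        ∀ a : ℝ, 1 ≤ a →
          F {lam : ESp N | a < rho H 0 lam} ≤ ENNReal.ofReal (c₇ / a ^ 2) :=
  spectral_tail_estimate_general H hH c₁ hc₁
end
end

section
/- Let δ > 0 and let φ : (0,δ) → (0,1) be right continuous and monotone increasing with φ(0+) = 0, and suppose there is a finite constant c₁ > 0 such that φ(2s) ≤ c₁ φ(s) for all 0 < s < δ/2. Then there exists a positive constant c₂ (depending only on c₁) such that for every Borel measure μ on ℝ^d, every Borel set E ⊆ ℝ^d, and every K > 0: if limsup_{r→0} μ(B(x,r))/φ(2r) ≤ K for every x ∈ E, then φ-m(E) ≥ c₂ μ(E)/K. -/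
/-!
Let `E_n` be the set of points of `E` with `μ(B(x,r)) ≤ 2K φ(2r)` for all `0 < r ≤ 1/(n+1)`;
by the density hypothesis the `E_n` increase to `E`. A set `t` of small diameter `D > 0` through
a point `x ∈ E_n` lies in `B(x, 2D)`, so `μ(t) ≤ 2K φ(4D) ≤ 2K c₁² φ(D)` by doubling twice, while
sets of diameter `0` are `μ`-null because `φ(0+) = 0`. The mass distribution principle then
gives `μ(E_n) ≤ 2K c₁² φ-m(E)`, and we let `n → ∞`.
-/

open MeasureTheory Filter Metric Set Topology
open scoped ENNReal

section MassDistribution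

variable {X : Type*} [EMetricSpace X] [MeasurableSpace X] [BorelSpace X]

/-- The mass distribution principle. -/
theorem mul_measure_le_mkMetric {μ : Measure X} {F : Set X} {m : ℝ≥0∞ → ℝ≥0∞} {c ρ : ℝ≥0∞}
    (hρ : 0 < ρ) (h : ∀ t : Set X, (t ∩ F).Nonempty → ediam t ≤ ρ → c * μ t ≤ m (ediam t)) :
    c * μ F ≤ Measure.mkMetric m F := by
  have hle : c • μ.restrict F ≤ Measure.mkMetric m := by
    refine Measure.le_mkMetric m _ ρ hρ fun s hs => ?_
    -- `F` need not be measurable, so we pass to the measurable set `closure s`.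
    have hrestrict : μ.restrict F s ≤ μ (closure s ∩ F) :=
      (measure_mono subset_closure).trans (Measure.restrict_apply isClosed_closure.measurableSet).le
    rw [Measure.smul_apply, smul_eq_mul, ← ediam_closure]
    rcases (closure s ∩ F).eq_empty_or_nonempty with hempty | hne
    · rw [hempty, measure_empty, nonpos_iff_eq_zero] at hrestrict
      simp [hrestrict]
    · calc c * μ.restrict F s ≤ c * μ (closure s) := by
            gcongr c * ?_; exact hrestrict.trans (measure_mono inter_subset_left)
        _ ≤ m (ediam (closure s)) := h _ hne ((ediam_closure s).le.trans hs)
  simpa using hle F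

end MassDistribution

theorem apply_four_mul_le_of_doubling {φ : ℝ → ℝ} {c₁ δ s : ℝ} (hc₁ : 0 ≤ c₁)
    (hφ : ∀ s, 0 < s → s < δ / 2 → φ (2 * s) ≤ c₁ * φ s) (hs : 0 < s) (hsδ : s < δ / 4) :
    φ (4 * s) ≤ c₁ ^ 2 * φ s := by
  calc φ (4 * s) = φ (2 * (2 * s)) := by ring_nf
    _ ≤ c₁ * φ (2 * s) := hφ _ (by positivity) (by linarith)
    _ ≤ c₁ * (c₁ * φ s) := by gcongr; exact hφ s hs (by linarith)
    _ = c₁ ^ 2 * φ s := by ring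

section BallBound

variable {X : Type*} [MetricSpace X] [MeasurableSpace X] {μ : Measure X} {φ : ℝ → ℝ}
  {C ρ : ℝ} {x : X}

def ballBoundedSet (μ : Measure X) (φ : ℝ → ℝ) (C ρ : ℝ) : Set X :=
  {x | ∀ r, 0 < r → r ≤ ρ → μ (ball x r) ≤ ENNReal.ofReal (C * φ (2 * r))}

theorem ballBoundedSet_anti {ρ' : ℝ} (h : ρ' ≤ ρ) :
    ballBoundedSet μ φ C ρ ⊆ ballBoundedSet μ φ C ρ' :=
  fun _ hx r hr hrρ => hx r hr (hrρ.trans h)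

theorem exists_pos_mem_ballBoundedSet_of_limsup_lt
    (hlim : limsup (fun r => μ (ball x r) / ENNReal.ofReal (φ (2 * r))) (𝓝[>] 0) <
      ENNReal.ofReal C) (hC : 0 ≤ C) :
    ∃ ρ > 0, x ∈ ballBoundedSet μ φ C ρ := by
  obtain ⟨ρ, hρ, hball⟩ := mem_nhdsGT_iff_exists_Ioc_subset.1 (eventually_lt_of_limsup_lt hlim)
  refine ⟨ρ, hρ, fun r hr hrρ => ?_⟩
  have hdiv : μ (ball x r) / ENNReal.ofReal (φ (2 * r)) ≤ ENNReal.ofReal C :=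
    le_of_lt (hball ⟨hr, hrρ⟩)
  rwa [ENNReal.div_le_iff_le_mul (Or.inr ENNReal.ofReal_ne_top) (Or.inl ENNReal.ofReal_ne_top),
    ← ENNReal.ofReal_mul hC] at hdiv

theorem measure_singleton_eq_zero_of_mem_ballBoundedSet (hφ0 : Tendsto φ (𝓝[>] 0) (𝓝 0))
    (hρ : 0 < ρ) (hx : x ∈ ballBoundedSet μ φ C ρ) : μ {x} = 0 := by
  have hlim : Tendsto (fun s => ENNReal.ofReal (C * φ s)) (𝓝[>] 0) (𝓝 0) := by
    simpa using (ENNReal.tendsto_ofReal (hφ0.const_mul C))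
  refine le_antisymm (ge_of_tendsto hlim ?_) zero_le
  filter_upwards [Ioo_mem_nhdsGT (by positivity : 0 < 2 * ρ)] with s hs
  calc μ {x} ≤ μ (ball x (s / 2)) := measure_mono (by simpa using half_pos hs.1)
    _ ≤ ENNReal.ofReal (C * φ (2 * (s / 2))) := hx _ (half_pos hs.1) (by linarith [hs.2])
    _ = ENNReal.ofReal (C * φ s) := by ring_nf

theorem measure_le_of_mem_ballBoundedSet {c₁ δ : ℝ} {t : Set X} (hC : 0 ≤ C) (hc₁ : 0 ≤ c₁)
    (hφ0 : Tendsto φ (𝓝[>] 0) (𝓝 0)) (hφ : ∀ s, 0 < s → s < δ / 2 → φ (2 * s) ≤ c₁ * φ s)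
    (hρ : 0 < ρ) (hδ : 0 < δ) (hx : x ∈ ballBoundedSet μ φ C ρ) (hxt : x ∈ t)
    (ht : ediam t ≤ ENNReal.ofReal (min (ρ / 2) (δ / 8))) :
    μ t ≤ ENNReal.ofReal (C * c₁ ^ 2 * φ (diam t)) := by
  have hbdd : Bornology.IsBounded t :=
    isBounded_iff_ediam_ne_top.2 (ne_top_of_le_ne_top ENNReal.ofReal_ne_top ht)
  have hD : diam t ≤ min (ρ / 2) (δ / 8) := ENNReal.toReal_le_of_le_ofReal (by positivity) ht
  rcases (diam_nonneg (s := t)).eq_or_lt with hzero | hpos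
  · have hsub : t ⊆ {x} := fun y hy =>
      dist_le_zero.1 (hzero ▸ dist_le_diam_of_mem hbdd hy hxt)
    calc μ t ≤ μ {x} := measure_mono hsub
      _ = 0 := measure_singleton_eq_zero_of_mem_ballBoundedSet hφ0 hρ hx
      _ ≤ _ := zero_le
  · have hsub : t ⊆ ball x (2 * diam t) := fun y hy =>
      mem_ball.2 ((dist_le_diam_of_mem hbdd hy hxt).trans_lt (by linarith))
    calc μ t ≤ μ (ball x (2 * diam t)) := measure_mono hsub
      _ ≤ ENNReal.ofReal (C * φ (2 * (2 * diam t))) :=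
          hx _ (by positivity) (by linarith [min_le_left (ρ / 2) (δ / 8)])
      _ = ENNReal.ofReal (C * φ (4 * diam t)) := by ring_nf
      _ ≤ ENNReal.ofReal (C * (c₁ ^ 2 * φ (diam t))) := by
          gcongr
          exact apply_four_mul_le_of_doubling hc₁ hφ hpos
            (by linarith [min_le_right (ρ / 2) (δ / 8)])
      _ = ENNReal.ofReal (C * c₁ ^ 2 * φ (diam t)) := by rw [mul_assoc]

theorem ofReal_mul_measure_le_mkMetric [BorelSpace X] {c₁ δ : ℝ} {F : Set X} (hC : 0 < C)
    (hc₁ : 0 < c₁) (hφ0 : Tendsto φ (𝓝[>] 0) (𝓝 0))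
    (hφ : ∀ s, 0 < s → s < δ / 2 → φ (2 * s) ≤ c₁ * φ s) (hρ : 0 < ρ) (hδ : 0 < δ)
    (hF : F ⊆ ballBoundedSet μ φ C ρ) :
    ENNReal.ofReal (1 / (C * c₁ ^ 2)) * μ F ≤
      Measure.mkMetric (fun r : ℝ≥0∞ => ENNReal.ofReal (φ r.toReal)) F := by
  refine mul_measure_le_mkMetric (ρ := ENNReal.ofReal (min (ρ / 2) (δ / 8)))
    (ENNReal.ofReal_pos.2 (lt_min (half_pos hρ) (by positivity))) fun t ⟨x, hxt, hxF⟩ ht => ?_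
  calc ENNReal.ofReal (1 / (C * c₁ ^ 2)) * μ t
      ≤ ENNReal.ofReal (1 / (C * c₁ ^ 2)) * ENNReal.ofReal (C * c₁ ^ 2 * φ (diam t)) := by
        gcongr
        exact measure_le_of_mem_ballBoundedSet hC.le hc₁.le hφ0 hφ hρ hδ (hF hxF) hxt ht
    _ = ENNReal.ofReal (φ (diam t)) := by
        rw [← ENNReal.ofReal_mul (by positivity)]
        field_simp

end BallBound

theorem rogers_taylor_density_theorem_general
    {d : ℕ} (c₁ : ℝ) (hc₁ : 0 < c₁) :
    ∃ c₂ : ℝ, 0 < c₂ ∧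
      ∀ (δ : ℝ), 0 < δ → ∀ φ : ℝ → ℝ,
        (∀ s, 0 < s → s < δ → φ s ∈ Set.Ioo (0 : ℝ) 1) →
        (∀ s t : ℝ, 0 < s → s ≤ t → t < δ → φ s ≤ φ t) →
        (∀ s, 0 < s → s < δ → ContinuousWithinAt φ (Set.Ici s) s) →
        Filter.Tendsto φ (nhdsWithin 0 (Set.Ioi 0)) (nhds 0) →
        (∀ s, 0 < s → s < δ / 2 → φ (2 * s) ≤ c₁ * φ s) →
        ∀ (μ : Measure (EuclideanSpace ℝ (Fin d))) (E : Set (EuclideanSpace ℝ (Fin d))),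
          MeasurableSet E → ∀ K : ℝ, 0 < K →
          (∀ x ∈ E, Filter.limsup
              (fun r : ℝ => μ (Metric.ball x r) / ENNReal.ofReal (φ (2 * r)))
              (nhdsWithin 0 (Set.Ioi 0)) ≤ ENNReal.ofReal K) →
          ENNReal.ofReal (c₂ / K) * μ E ≤
            Measure.mkMetric (fun r : ℝ≥0∞ => ENNReal.ofReal (φ r.toReal)) E := by
  refine ⟨1 / (2 * c₁ ^ 2), by positivity, ?_⟩
  intro δ hδ φ _ _ _ hφ0 hφ μ E _ K hK hlim
  set F : ℕ → Set (EuclideanSpace ℝ (Fin d)) :=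
    fun n => E ∩ ballBoundedSet μ φ (2 * K) (1 / (n + 1))
  have hF : Monotone F := fun a b hab =>
    inter_subset_inter_right E (ballBoundedSet_anti (Nat.one_div_le_one_div hab))
  have hcover : ⋃ n, F n = E := by
    refine (iUnion_subset fun n => inter_subset_left).antisymm fun x hx => ?_
    have hK2 : ENNReal.ofReal K < ENNReal.ofReal (2 * K) :=
      (ENNReal.ofReal_lt_ofReal_iff (by positivity)).2 (by linarith)
    obtain ⟨ρ, hρ, hxρ⟩ :=
      exists_pos_mem_ballBoundedSet_of_limsup_lt ((hlim x hx).trans_lt hK2) (by positivity)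
    obtain ⟨n, hn⟩ := exists_nat_one_div_lt hρ
    exact mem_iUnion.2 ⟨n, hx, ballBoundedSet_anti hn.le hxρ⟩
  rw [← hcover, hF.measure_iUnion, ENNReal.mul_iSup]
  refine iSup_le fun n => le_trans ?_ (measure_mono (subset_iUnion F n))
  rw [show 1 / (2 * c₁ ^ 2) / K = 1 / (2 * K * c₁ ^ 2) by ring]
  exact ofReal_mul_measure_le_mkMetric (by positivity) hc₁ hφ0 hφ (by positivity) hδ
    inter_subset_right

/-- Rogers–Taylor upper density theorem (Lemma 3.1): for every doubling constant `c₁` there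
is `c₂ > 0` such that for every gauge `φ` (right-continuous, increasing, `φ(0+) = 0`,
`(0,1)`-valued and `c₁`-doubling on `(0,δ)`), every Borel measure `μ` on `ℝ^d`, every Borel
set `E` and every `K > 0`: if the upper `φ`-density of `μ` at each `x ∈ E` is at most `K`,
then `φ-m(E) ≥ c₂ μ(E) / K`. -/
theorem rogers_taylor_density_theorem
    {d : ℕ} (hd : 0 < d) (c₁ : ℝ) (hc₁ : 0 < c₁) :
    ∃ c₂ : ℝ, 0 < c₂ ∧
      ∀ (δ : ℝ), 0 < δ → ∀ φ : ℝ → ℝ,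
        (∀ s, 0 < s → s < δ → φ s ∈ Set.Ioo (0 : ℝ) 1) →
        (∀ s t : ℝ, 0 < s → s ≤ t → t < δ → φ s ≤ φ t) →
        (∀ s, 0 < s → s < δ → ContinuousWithinAt φ (Set.Ici s) s) →
        Filter.Tendsto φ (nhdsWithin 0 (Set.Ioi 0)) (nhds 0) →
        (∀ s, 0 < s → s < δ / 2 → φ (2 * s) ≤ c₁ * φ s) →
        ∀ (μ : Measure (EuclideanSpace ℝ (Fin d))) (E : Set (EuclideanSpace ℝ (Fin d))),
          MeasurableSet E → ∀ K : ℝ, 0 < K →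
          (∀ x ∈ E, Filter.limsup
              (fun r : ℝ => μ (Metric.ball x r) / ENNReal.ofReal (φ (2 * r)))
              (nhdsWithin 0 (Set.Ioi 0)) ≤ ENNReal.ofReal K) →
          ENNReal.ofReal (c₂ / K) * μ E ≤
            Measure.mkMetric (fun r : ℝ≥0∞ => ENNReal.ofReal (φ r.toReal)) E :=
  rogers_taylor_density_theorem_general c₁ hc₁
end

section
/- Assume d > Q (with d a positive integer). Then there exists a finite constant c > 0 such that for all 0 < r < 1: ∫_{[0,1]^N} min{1, r^d / ρ(0,t)^d} dt ≤ c r^Q. (This is the key deterministic estimate behind the sojourn-time moment bound E[T(r)] ≤ c r^Q.) -/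
/-!
On the unit cube every coordinate satisfies `t_j ^ H_j ≤ ρ(0,t)`, so the anisotropic ball
`{ρ(0,·) < R}` meets the cube inside the box `∏_j [0, R ^ (1/H_j)]`, of volume `R ^ Q`.
The superlevel set `{min 1 (r^d / ρ^d) > s}` is such a ball with `R = r s^(-1/d)`, hence has
volume at most `r^Q s^(-Q/d)`, and the layer-cake formula gives
`∫ min 1 (r^d/ρ^d) ≤ r^Q ∫_0^1 s^(-Q/d) ds = r^Q / (1 - Q/d)`, finite because `Q < d`.
-/

open MeasureTheory Filter
open scoped ENNReal NNReal

noncomputable section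

open Set

theorem EuclideanSpace.volume_setOf_forall_mem_Icc {ι : Type*} [Fintype ι] (a b : ι → ℝ) :
    volume {x : EuclideanSpace ℝ ι | ∀ i, x i ∈ Icc (a i) (b i)} =
      ∏ i, ENNReal.ofReal (b i - a i) := by
  have hpre : {x : EuclideanSpace ℝ ι | ∀ i, x i ∈ Icc (a i) (b i)} =
      (MeasurableEquiv.toLp 2 (ι → ℝ)).symm ⁻¹' univ.pi fun i => Icc (a i) (b i) := by
    ext
    simp [Pi.le_def, forall_and]
  rw [hpre, (EuclideanSpace.volume_preserving_symm_measurableEquiv_toLp ι).measure_preimage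
    (MeasurableSet.univ_pi fun _ => measurableSet_Icc).nullMeasurableSet, volume_pi_pi]
  simp only [Real.volume_Icc]

theorem integral_le_of_measure_lt_le_rpow {α : Type*} [MeasurableSpace α] {μ : Measure α}
    {f : α → ℝ} (hf : Measurable f) (hf0 : ∀ x, 0 ≤ f x) (hf1 : ∀ x, f x ≤ 1)
    {C a : ℝ} (hC : 0 ≤ C) (ha : a < 1)
    (hμ : ∀ s ∈ Ioo (0 : ℝ) 1, μ {x | s < f x} ≤ ENNReal.ofReal (C * s ^ (-a))) :
    ∫ x, f x ∂μ ≤ C / (1 - a) := by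
  have hvanish : ∀ s ∈ Ici (1 : ℝ), μ {x | s < f x} = 0 := fun s hs => by
    have hempty : {x | s < f x} = ∅ :=
      eq_empty_of_forall_notMem fun x hx => ((hf1 x).trans hs).not_gt hx
    rw [hempty, measure_empty]
  have hint : IntegrableOn (fun s : ℝ => C * s ^ (-a)) (Ioo 0 1) := by
    refine Integrable.const_mul ?_ C
    exact (intervalIntegrable_iff_integrableOn_Ioo_of_le zero_le_one).mp
      (intervalIntegral.intervalIntegrable_rpow' (by linarith))
  have hval : ∫ s in Ioo (0 : ℝ) 1, C * s ^ (-a) = C / (1 - a) := by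
    rw [integral_const_mul, ← integral_Ioc_eq_integral_Ioo,
      ← intervalIntegral.integral_of_le zero_le_one, integral_rpow (Or.inl (by linarith)),
      Real.one_rpow, Real.zero_rpow (by linarith)]
    ring
  have hlayer : ∫⁻ x, ENNReal.ofReal (f x) ∂μ ≤ ENNReal.ofReal (C / (1 - a)) :=
    calc ∫⁻ x, ENNReal.ofReal (f x) ∂μ
        = ∫⁻ s in Ioo 0 1 ∪ Ici 1, μ {x | s < f x} := by
          rw [Ioo_union_Ici_eq_Ioi zero_lt_one,
            lintegral_eq_lintegral_meas_lt _ (ae_of_all _ hf0) hf.aemeasurable]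
      _ = ∫⁻ s in Ioo 0 1, μ {x | s < f x} := by
          rw [lintegral_union measurableSet_Ici (disjoint_left.mpr fun _ hx hx' => hx.2.not_ge hx'),
            setLIntegral_congr_fun measurableSet_Ici hvanish, lintegral_zero, add_zero]
      _ ≤ ∫⁻ s in Ioo 0 1, ENNReal.ofReal (C * s ^ (-a)) :=
          setLIntegral_mono' measurableSet_Ioo hμ
      _ = ENNReal.ofReal (C / (1 - a)) := by
          rw [← ofReal_integral_eq_lintegral_ofReal hint
            ((ae_restrict_iff' measurableSet_Ioo).mpr (ae_of_all _ fun s hs =>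
              mul_nonneg hC (Real.rpow_nonneg hs.1.le _))), hval]
  rw [integral_eq_lintegral_of_nonneg_ae (ae_of_all _ hf0) hf.aestronglyMeasurable]
  exact ENNReal.toReal_le_of_le_ofReal (div_nonneg hC (by linarith)) hlayer

theorem lt_mul_rpow_of_lt_min_div_pow {ρ r s : ℝ} {d : ℕ} (hρ : 0 ≤ ρ) (hr : 0 < r)
    (hs : 0 < s) (hd : d ≠ 0) (h : s < min 1 (r ^ d / ρ ^ d)) :
    ρ < r * s ^ (-(d : ℝ)⁻¹) := by
  have hR : 0 < r * s ^ (-(d : ℝ)⁻¹) := mul_pos hr (Real.rpow_pos_of_pos hs _)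
  rcases hρ.eq_or_lt with rfl | hρ
  · exact hR
  have hRd : (r * s ^ (-(d : ℝ)⁻¹)) ^ d = r ^ d / s := by
    rw [mul_pow, ← Real.rpow_natCast (s ^ _), ← Real.rpow_mul hs.le,
      neg_mul, inv_mul_cancel₀ (Nat.cast_ne_zero.mpr hd), Real.rpow_neg_one, div_eq_mul_inv]
  rw [← pow_lt_pow_iff_left₀ hρ.le hR.le hd, hRd, lt_div_iff₀ hs, mul_comm]
  exact (lt_div_iff₀ (pow_pos hρ d)).mp (h.trans_le (min_le_right _ _))

section Anisotropic

variable {N : ℕ} {H : Fin N → ℝ}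

theorem Qof_nonneg (hH : ∀ j, 0 < H j) : 0 ≤ Qof H :=
  Finset.sum_nonneg fun j _ => (inv_pos.mpr (hH j)).le

theorem rho_nonneg (H : Fin N → ℝ) (s t : ESp N) : 0 ≤ rho H s t :=
  Finset.sum_nonneg fun _ _ => Real.rpow_nonneg (abs_nonneg _) _

theorem continuous_rho (hH : ∀ j, 0 ≤ H j) (s : ESp N) : Continuous (rho H s) :=
  continuous_finsetSum _ fun j _ =>
    (Real.continuous_rpow_const (hH j)).comp (continuous_const.sub (by fun_prop)).abs

theorem abs_sub_rpow_le_rho (H : Fin N → ℝ) (s t : ESp N) (j : Fin N) :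
    |s j - t j| ^ H j ≤ rho H s t :=
  Finset.single_le_sum (f := fun i => |s i - t i| ^ H i)
    (fun _ _ => Real.rpow_nonneg (abs_nonneg _) _) (Finset.mem_univ j)

theorem volume_unitCube_inter_rho_lt_le (hH : ∀ j, 0 < H j) {R : ℝ} (hR : 0 < R) :
    volume ({t : ESp N | ∀ j, t j ∈ Icc (0 : ℝ) 1} ∩ {t | rho H 0 t < R}) ≤
      ENNReal.ofReal (R ^ Qof H) := by
  have hbox : {t : ESp N | ∀ j, t j ∈ Icc (0 : ℝ) 1} ∩ {t | rho H 0 t < R} ⊆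
      {t | ∀ j, t j ∈ Icc 0 (R ^ (H j)⁻¹)} := by
    rintro t ⟨htc, htR⟩ j
    have ht0 : ∀ i, 0 ≤ t i := fun i => (htc i).1
    have hj : t j ^ H j ≤ rho H 0 t := by
      simpa [abs_of_nonneg (ht0 j)] using abs_sub_rpow_le_rho H 0 t j
    have hlt : (t j ^ H j) ^ (H j)⁻¹ < R ^ (H j)⁻¹ :=
      Real.rpow_lt_rpow (Real.rpow_nonneg (ht0 j) _) (hj.trans_lt htR) (inv_pos.mpr (hH j))
    rw [← Real.rpow_mul (ht0 j), mul_inv_cancel₀ (hH j).ne', Real.rpow_one] at hlt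
    exact ⟨ht0 j, hlt.le⟩
  calc _ ≤ volume {t : ESp N | ∀ j, t j ∈ Icc 0 (R ^ (H j)⁻¹)} := measure_mono hbox
    _ = ENNReal.ofReal (R ^ Qof H) := by
      rw [EuclideanSpace.volume_setOf_forall_mem_Icc, Qof, Real.rpow_sum_of_pos hR,
        ENNReal.ofReal_prod_of_nonneg fun j _ => Real.rpow_nonneg hR.le _]
      simp only [sub_zero]

theorem volume_lt_min_div_rho_pow_inter_unitCube_le (hH : ∀ j, 0 < H j) {d : ℕ} (hd : d ≠ 0)
    {r s : ℝ} (hr : 0 < r) (hs : 0 < s) :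
    volume ({t | s < min 1 (r ^ d / rho H 0 t ^ d)} ∩
        {t : ESp N | ∀ j, t j ∈ Icc (0 : ℝ) 1}) ≤ ENNReal.ofReal (r ^ Qof H * s ^ (-(Qof H / d))) :=
  calc _ ≤ volume ({t : ESp N | ∀ j, t j ∈ Icc (0 : ℝ) 1} ∩
        {t | rho H 0 t < r * s ^ (-(d : ℝ)⁻¹)}) :=
        measure_mono fun t ht =>
          ⟨ht.2, lt_mul_rpow_of_lt_min_div_pow (rho_nonneg H 0 t) hr hs hd ht.1⟩
    _ ≤ ENNReal.ofReal ((r * s ^ (-(d : ℝ)⁻¹)) ^ Qof H) :=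
        volume_unitCube_inter_rho_lt_le hH (mul_pos hr (Real.rpow_pos_of_pos hs _))
    _ = ENNReal.ofReal (r ^ Qof H * s ^ (-(Qof H / d))) := by
        rw [Real.mul_rpow hr.le (Real.rpow_nonneg hs.le _), ← Real.rpow_mul hs.le]
        ring_nf

end Anisotropic

theorem sojourn_integral_estimate_general
    {N : ℕ} (H : Fin N → ℝ) (hH : ∀ j, H j ∈ Set.Ioo (0 : ℝ) 1)
    (d : ℕ) (hdQ : Qof H < d) :
    ∃ c : ℝ, 0 < c ∧ ∀ r : ℝ, 0 < r → r < 1 →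
      ∫ t in {t : ESp N | ∀ j, t j ∈ Set.Icc (0 : ℝ) 1},
          min 1 (r ^ d / rho H 0 t ^ d) ∂volume ≤ c * r ^ Qof H := by
  have hHpos : ∀ j, 0 < H j := fun j => (hH j).1
  have hd : (0 : ℝ) < d := (Qof_nonneg hHpos).trans_lt hdQ
  have ha : Qof H / d < 1 := (div_lt_one hd).mpr hdQ
  refine ⟨1 / (1 - Qof H / d), by simpa using ha, fun r hr _ => ?_⟩
  have hρ : Measurable (rho H 0) := (continuous_rho (fun j => (hHpos j).le) 0).measurable
  have hf : Measurable fun t => min 1 (r ^ d / rho H 0 t ^ d) := by fun_prop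
  rw [one_div_mul_eq_div]
  refine integral_le_of_measure_lt_le_rpow hf
    (fun t => le_min zero_le_one (div_nonneg (by positivity) (pow_nonneg (rho_nonneg H 0 t) d)))
    (fun t => min_le_left _ _) (Real.rpow_nonneg hr.le _) ha fun s hs => ?_
  rw [Measure.restrict_apply (measurableSet_lt measurable_const hf)]
  exact volume_lt_min_div_rho_pow_inter_unitCube_le hHpos (Nat.cast_pos.mp hd).ne' hr hs.1

/-- The key deterministic estimate behind `E[T(r)] ≤ c r^Q`: if `d > Q` then
`∫_{[0,1]^N} min{1, r^d / ρ(0,t)^d} dt ≤ c r^Q` for all `0 < r < 1`. -/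
theorem sojourn_integral_estimate
    {N : ℕ} (hN : 0 < N) (H : Fin N → ℝ) (hH : ∀ j, H j ∈ Set.Ioo (0 : ℝ) 1)
    (d : ℕ) (hd : 0 < d) (hdQ : Qof H < d) :
    ∃ c : ℝ, 0 < c ∧ ∀ r : ℝ, 0 < r → r < 1 →
      ∫ t in {t : ESp N | ∀ j, t j ∈ Set.Icc (0 : ℝ) 1},
          min 1 (r ^ d / rho H 0 t ^ d) ∂volume ≤ c * r ^ Qof H :=
  sojourn_integral_estimate_general H hH d hdQ
end
end
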